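/- Let C be the code over F_{q^u} with parity check matrix A ⊗ B, where A and B are Hamming parity check matrices over F_{q^u} and F_q as in the extended Kronecker construction. For every vector x ∈ (F_{q^u})^{n_a n_b}, the distance d(x, C) equals the rank (over F_q) of the m_b × (u m_a) matrix μ_x obtained from the syndrome S_x = B [x] A^T by expanding each F_{q^u}-entry of its rows into u coordinates over F_q. -/

import Mathlib

/-! The code is the kernel of the syndrome map `e ↦ S_e = B [e] Aᵀ`, so `d(x, C)` is the least
weight of an `e` with `S_e = S_x`. Every row of `S_e` is a `K`-combination of the vectors
`e (j, i) • A_{·j}` over the support of `e`, so the `K`-dimension of the row space of `S_e` is at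
most the weight of `e`. Conversely, a matrix whose row space has `K`-dimension `r` is a sum of `r`
rank-one matrices `λ_k w_kᵀ` with `λ_k` over `K`; as every vector is a multiple of a column of a
Hamming parity check matrix, `λ_k = B β_k` and `w_k = A α_k` with `α_k, β_k` of weight at most one,
and `e = ∑ α_k ⊗ β_k` has weight at most `r` and syndrome `S`. Expanding entries in a `K`-basis
of `L` is a `K`-linear isomorphism on rows, so the rank of `μ_x` is that dimension for `S_x`. -/

open Matrix Kronecker

/-- H is a parity check matrix of a Hamming code: its columns are nonzero, pairwise
non-proportional, and represent all 1-dimensional subspaces of F^m. -/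
def IsHammingPCM {F : Type*} [Field F] {m n : ℕ} (H : Matrix (Fin m) (Fin n) F) : Prop :=
  (∀ j, (fun i => H i j) ≠ (0 : Fin m → F)) ∧
  (∀ j j' : Fin n, j ≠ j' → ∀ c : F, (fun i => H i j) ≠ c • (fun i => H i j')) ∧
  (∀ x : Fin m → F, x ≠ 0 → ∃ (j : Fin n) (c : F), x = c • (fun i => H i j))

open Submodule Set Module

theorem hammingNorm_mul_le {ι κ R : Type*} [Fintype ι] [Fintype κ] [MulZeroClass R]
    [DecidableEq R] (f : ι → R) (g : κ → R) :
    hammingNorm (fun p : ι × κ => f p.1 * g p.2) ≤ hammingNorm f * hammingNorm g := by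
  rw [hammingNorm, hammingNorm, hammingNorm, ← Finset.card_product]
  refine Finset.card_le_card fun p hp => ?_
  simp only [Finset.mem_filter, Finset.mem_univ, true_and, Finset.mem_product] at hp ⊢
  exact ⟨left_ne_zero_of_mul hp, right_ne_zero_of_mul hp⟩

theorem hammingNorm_sum_le {ι κ R : Type*} [Fintype κ] [AddCommMonoid R] [DecidableEq R]
    (s : Finset ι) (f : ι → κ → R) :
    hammingNorm (∑ i ∈ s, f i) ≤ ∑ i ∈ s, hammingNorm (f i) := by
  classical
  refine (Finset.card_le_card fun p hp => ?_).trans Finset.card_biUnion_le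
  simp only [Finset.mem_filter, Finset.mem_univ, true_and, Finset.sum_apply,
    Finset.mem_biUnion] at hp ⊢
  exact Finset.exists_ne_zero_of_sum_ne_zero hp

theorem IsHammingPCM.exists_hammingNorm_le_one_mulVec_eq {F : Type*} [Field F] [DecidableEq F]
    {m n : ℕ} {H : Matrix (Fin m) (Fin n) F} (hH : IsHammingPCM H) (y : Fin m → F) :
    ∃ v, hammingNorm v ≤ 1 ∧ H *ᵥ v = y := by
  by_cases hy : y = 0
  · exact ⟨0, by simp, by simp [hy]⟩
  obtain ⟨j, c, rfl⟩ := hH.2.2 y hy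
  refine ⟨Pi.single j c,
    (Finset.card_le_card (t := {j}) fun i hi => ?_).trans_eq (Finset.card_singleton j), ?_⟩
  · rw [Finset.mem_singleton]
    by_contra h
    exact (Finset.mem_filter.1 hi).2 (by simp [h])
  · ext
    simp [mulVec_single, mul_comm]

theorem rank_of_repr_eq_finrank_span {K L ι m m' : Type*} [Field K] [Field L] [Algebra K L]
    [Fintype ι] [Fintype m] [Finite m'] (μ : Basis ι K L) (S : Matrix m' m L) :
    (Matrix.of fun s (jt : m × ι) => μ.repr (S s jt.1) jt.2).rank =
      finrank K (span K (range S)) := by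
  let expand : (m → L) ≃ₗ[K] (m × ι → K) :=
    (LinearEquiv.piCongrRight fun _ => μ.equivFun).trans (LinearEquiv.curry K K m ι).symm
  rw [rank_eq_finrank_span_row, ← expand.finrank_map_eq, map_span, LinearEquiv.coe_coe]
  exact congrArg (fun s => finrank K (span K s)) (range_comp expand S)

theorem exists_eq_sum_vecMulVec {K L m m' : Type*} [Field K] [Field L] [Algebra K L] [Finite m']
    (S : Matrix m' m L) :
    ∃ (lam : Fin (finrank K (span K (range S))) → m' → K)
      (w : Fin (finrank K (span K (range S))) → m → L),
      S = ∑ k, vecMulVec (algebraMap K L ∘ lam k) (w k) := by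
  have : Module.Finite K (span K (range S)) :=
    FiniteDimensional.span_of_finite K (finite_range S)
  let b := Module.finBasis K (span K (range S))
  let row s : span K (range S) := ⟨S s, subset_span ⟨s, rfl⟩⟩
  refine ⟨fun k s => b.repr (row s) k, fun k => b k, ?_⟩
  ext s t
  have hrow := congrArg (fun v : span K (range S) => (v : m → L) t) (b.sum_repr (row s))
  simp only [coe_sum, coe_smul, Finset.sum_apply, Pi.smul_apply] at hrow
  simp only [Matrix.sum_apply, vecMulVec_apply, Function.comp_apply, ← Algebra.smul_def]
  exact hrow.symm

namespace KroneckerCode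

variable {K L : Type*} [Field K] [Field L] [Algebra K L]
  {m n m' n' : Type*} [Fintype n] [Fintype n']

noncomputable def syndrome (A : Matrix m n L) (B : Matrix m' n' K) :
    (n × n' → L) →ₗ[L] Matrix m' m L where
  toFun e := B.map (algebraMap K L) * Matrix.of (fun i j => e (j, i)) * Aᵀ
  map_add' e f := by
    rw [← Matrix.add_mul, ← Matrix.mul_add]
    rfl
  map_smul' c e := by
    rw [RingHom.id_apply, ← Matrix.smul_mul, ← Matrix.mul_smul]
    rfl

theorem syndrome_apply (A : Matrix m n L) (B : Matrix m' n' K) (e : n × n' → L) :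
    syndrome A B e = B.map (algebraMap K L) * Matrix.of (fun i j => e (j, i)) * Aᵀ :=
  rfl

theorem kronecker_mulVec_eq_zero_iff [Fintype m] (A : Matrix m n L) (B : Matrix m' n' K)
    (e : n × n' → L) :
    (A ⊗ₖ B.map (algebraMap K L)) *ᵥ e = 0 ↔ syndrome A B e = 0 := by
  rw [← vec_eq_zero_iff]
  exact Eq.congr_left (kronecker_mulVec_vec _ (Matrix.of fun i j => e (j, i)) A)

theorem syndrome_row_eq_sum (A : Matrix m n L) (B : Matrix m' n' K) (e : n × n' → L) (s : m') :
    syndrome A B e s = ∑ p : n × n', B s p.2 • e p • Aᵀ p.1 := by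
  ext t
  simp [syndrome_apply, Matrix.mul_apply, Fintype.sum_prod_type, Finset.sum_apply,
    Algebra.smul_def, Finset.sum_mul, mul_assoc, mul_left_comm]

theorem finrank_span_syndrome_le_hammingNorm [DecidableEq L] (A : Matrix m n L)
    (B : Matrix m' n' K) (e : n × n' → L) :
    finrank K (span K (range (syndrome A B e))) ≤ hammingNorm e := by
  classical
  set F := ({p | e p ≠ 0} : Finset (n × n')).image fun p => e p • Aᵀ p.1
  have hrows : span K (range (syndrome A B e)) ≤ span K (F : Set (m → L)) := by
    refine span_le.2 ?_
    rintro _ ⟨s, rfl⟩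
    rw [syndrome_row_eq_sum]
    refine Submodule.sum_mem _ fun p _ => Submodule.smul_mem _ _ ?_
    by_cases hp : e p = 0
    · simp [hp]
    · exact subset_span (Finset.mem_image_of_mem _ (by simpa using hp))
  calc finrank K (span K (range (syndrome A B e)))
      ≤ finrank K (span K (F : Set (m → L))) := Submodule.finrank_mono hrows
    _ ≤ F.card := finrank_span_finset_le_card F
    _ ≤ hammingNorm e := Finset.card_image_le

theorem syndrome_outerProduct (A : Matrix m n L) (B : Matrix m' n' K) (α : n → L)
    (β : n' → K) :
    syndrome A B (fun p => α p.1 * algebraMap K L (β p.2)) =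
      vecMulVec (algebraMap K L ∘ (B *ᵥ β)) (A *ᵥ α) := by
  have houter : Matrix.of (fun i j => α j * algebraMap K L (β i)) =
      vecMulVec (algebraMap K L ∘ β) α := by
    ext
    simp [vecMulVec_apply, mul_comm]
  rw [syndrome_apply, houter, mul_vecMulVec, vecMulVec_mul, vecMul_transpose]
  congr
  ext
  exact (RingHom.map_mulVec _ _ _ _).symm

theorem exists_syndrome_eq_hammingNorm_le_finrank [DecidableEq L] {ma na mb nb : ℕ}
    {A : Matrix (Fin ma) (Fin na) L} (hA : IsHammingPCM A)
    {B : Matrix (Fin mb) (Fin nb) K} (hB : IsHammingPCM B) (S : Matrix (Fin mb) (Fin ma) L) :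
    ∃ e, syndrome A B e = S ∧ hammingNorm e ≤ finrank K (span K (range S)) := by
  classical
  obtain ⟨lam, w, hS⟩ := exists_eq_sum_vecMulVec (K := K) S
  choose β hβ hBβ using fun k => hB.exists_hammingNorm_le_one_mulVec_eq (lam k)
  choose α hα hAα using fun k => hA.exists_hammingNorm_le_one_mulVec_eq (w k)
  refine ⟨∑ k, fun p => α k p.1 * algebraMap K L (β k p.2), ?_, ?_⟩
  · simp only [map_sum, syndrome_outerProduct, hBβ, hAα]
    exact hS.symm
  · calc hammingNorm (∑ k, fun p : Fin na × Fin nb => α k p.1 * algebraMap K L (β k p.2))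
        ≤ ∑ k, hammingNorm (fun p : Fin na × Fin nb => α k p.1 * algebraMap K L (β k p.2)) :=
          hammingNorm_sum_le _ _
      _ ≤ ∑ _k, 1 := Finset.sum_le_sum fun k _ => (hammingNorm_mul_le _ _).trans <|
          Nat.mul_le_mul (hα k)
            ((hammingNorm_comp_le_hammingNorm _ fun _ => map_zero _).trans (hβ k))
      _ = finrank K (span K (range S)) := by simp

end KroneckerCode

open KroneckerCode

theorem distance_eq_syndrome_rank_general
    {u ma mb na nb : ℕ} (K L : Type) [Field K]
    [Field L] [DecidableEq L] [Algebra K L]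
    (μ : Module.Basis (Fin u) K L)
    (A : Matrix (Fin ma) (Fin na) L) (hA : IsHammingPCM A)
    (B : Matrix (Fin mb) (Fin nb) K) (hB : IsHammingPCM B)
    (x : Fin na × Fin nb → L) :
    sInf {d : ℕ | ∃ c : Fin na × Fin nb → L,
        (A ⊗ₖ B.map (algebraMap K L)).mulVec c = 0 ∧ hammingDist x c = d} =
      (Matrix.of fun (s : Fin mb) (jt : Fin ma × Fin u) =>
        μ.repr ((B.map (algebraMap K L) *
          (Matrix.of fun (i : Fin nb) (j : Fin na) => x (j, i)) * Aᵀ) s jt.1)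
          jt.2).rank := by
  rw [← syndrome_apply, rank_of_repr_eq_finrank_span]
  obtain ⟨e, he, hwt⟩ := exists_syndrome_eq_hammingNorm_le_finrank hA hB (syndrome A B x)
  have hx_sub_e : (A ⊗ₖ B.map (algebraMap K L)) *ᵥ (x - e) = 0 := by
    rw [kronecker_mulVec_eq_zero_iff, map_sub, he, sub_self]
  have hdist : hammingDist x (x - e) = hammingNorm e := by
    rw [hammingDist_comm, hammingDist_eq_hammingNorm, neg_sub, sub_add_cancel]
  apply le_antisymm
  · exact le_trans (Nat.sInf_le ⟨x - e, hx_sub_e, hdist⟩) hwt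
  apply le_csInf
  · exact ⟨_, x - e, hx_sub_e, hdist⟩
  rintro _ ⟨c, hc, rfl⟩
  rw [kronecker_mulVec_eq_zero_iff] at hc
  calc finrank K (span K (range (syndrome A B x)))
      = finrank K (span K (range (syndrome A B (x - c)))) := by rw [map_sub, hc, sub_zero]
    _ ≤ hammingNorm (x - c) := finrank_span_syndrome_le_hammingNorm A B (x - c)
    _ = hammingDist x c := by rw [hammingDist_comm, hammingDist_eq_hammingNorm, neg_add_eq_sub]

/-- For the extended Kronecker code C with parity check matrix A ⊗ B,
the distance d(x,C) of any x equals the F_q-rank of the m_b × (u·m_a) matrix μ_x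
obtained from the syndrome S_x = B [x] Aᵀ by expanding entries in a basis of F_{q^u}
over F_q. -/
theorem distance_eq_syndrome_rank
    {q u ma mb na nb : ℕ} (K L : Type) [Field K] [Fintype K] [DecidableEq K]
    [Field L] [Fintype L] [DecidableEq L] [Algebra K L]
    (hq : Fintype.card K = q) (hL : Fintype.card L = q ^ u)
    (hu : 1 ≤ u) (hma : 2 ≤ ma) (hmb : 2 ≤ mb)
    (μ : Module.Basis (Fin u) K L)
    (A : Matrix (Fin ma) (Fin na) L) (hA : IsHammingPCM A)
    (B : Matrix (Fin mb) (Fin nb) K) (hB : IsHammingPCM B)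
    (x : Fin na × Fin nb → L) :
    sInf {d : ℕ | ∃ c : Fin na × Fin nb → L,
        (A ⊗ₖ B.map (algebraMap K L)).mulVec c = 0 ∧ hammingDist x c = d} =
      (Matrix.of fun (s : Fin mb) (jt : Fin ma × Fin u) =>
        μ.repr ((B.map (algebraMap K L) *
          (Matrix.of fun (i : Fin nb) (j : Fin na) => x (j, i)) * Aᵀ) s jt.1)
          jt.2).rank :=
  distance_eq_syndrome_rank_general K L μ A hA B hB x
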